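/- Let $H$ be a connected graph on $[n]$. Then $c_{W(H)}(T) = |T| + 1$ for all $T \in \mathcal{C}(W(H))$ (i.e., the binomial edge ideal of the whisker graph $W(H)$ is unmixed) if and only if $H$ is a complete graph. Moreover, when $H$ is complete, for every nonempty $T \in \mathcal{C}(W(H))$ one has $T \subseteq [n]$, $T \neq [n]$, and $c_{W(H)}(T) = |T| + 1$. -/

import Mathlib

open SimpleGraph Set

/-- Number of connected components of the induced subgraph of `G` on `s`. -/
noncomputable def nc {V : Type*} (G : SimpleGraph V) (s : Set V) : ℕ :=
  Nat.card (G.induce s).ConnectedComponent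

/-- `T` has the cut point property for `G`: every `i ∈ T` is a cut point of the
induced subgraph on `Tᶜ ∪ {i}` (removing `i` increases the number of components). -/
def CutPointProperty {V : Type*} (G : SimpleGraph V) (T : Set V) : Prop :=
  ∀ i ∈ T, nc G (Tᶜ ∪ {i}) < nc G Tᶜ

/-- The join `G₁ * G₂` of two graphs on disjoint vertex sets. -/
def joinGraph {V₁ V₂ : Type*} (G₁ : SimpleGraph V₁) (G₂ : SimpleGraph V₂) :
    SimpleGraph (V₁ ⊕ V₂) where
  Adj v w :=
    match v, w with
    | Sum.inl a, Sum.inl b => G₁.Adj a b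
    | Sum.inr a, Sum.inr b => G₂.Adj a b
    | Sum.inl _, Sum.inr _ => True
    | Sum.inr _, Sum.inl _ => True
  symm := by constructor; rintro (a | a) (b | b) h <;> simp_all <;> exact h.symm
  loopless := by constructor; rintro (a | a) h <;> simp_all

/-- Disjoint union of an indexed family of graphs. -/
def sigmaGraph {ι : Type*} {V : ι → Type*} (G : ∀ i, SimpleGraph (V i)) :
    SimpleGraph (Σ i, V i) where
  Adj v w := ∃ h : v.1 = w.1, (G w.1).Adj (h ▸ v.2) w.2
  symm := by
    constructor
    rintro ⟨i, a⟩ ⟨j, b⟩ ⟨h, hab⟩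
    dsimp at h hab ⊢
    subst h
    exact ⟨rfl, hab.symm⟩
  loopless := by
    constructor
    rintro ⟨i, a⟩ ⟨h, hab⟩
    dsimp at h hab
    exact (G i).irrefl hab
/-- The corona `H ⊙ H'`: one copy of `H'` for each vertex `v` of `H`,
with every vertex of the copy joined to `v`. -/
def coronaGraph {V₁ V₂ : Type*} (H : SimpleGraph V₁) (H' : SimpleGraph V₂) :
    SimpleGraph (V₁ ⊕ V₁ × V₂) where
  Adj v w :=
    match v, w with
    | Sum.inl a, Sum.inl b => H.Adj a b
    | Sum.inl a, Sum.inr p => a = p.1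
    | Sum.inr p, Sum.inl b => p.1 = b
    | Sum.inr p, Sum.inr q => p.1 = q.1 ∧ H'.Adj p.2 q.2
  symm := by
    constructor
    rintro (a | p) (b | q) h <;> dsimp at h ⊢
    · exact h.symm
    · exact h.symm
    · exact h.symm
    · exact ⟨h.1.symm, h.2.symm⟩
  loopless := by constructor; rintro (a | p) h <;> simp_all

/-- The whisker graph `W(H)`: a pendant vertex attached to each vertex of `H`. -/
def whiskerGraph {V : Type*} (H : SimpleGraph V) : SimpleGraph (V ⊕ V) where
  Adj v w :=
    match v, w with
    | Sum.inl a, Sum.inl b => H.Adj a b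
    | Sum.inl a, Sum.inr b => a = b
    | Sum.inr a, Sum.inl b => a = b
    | Sum.inr _, Sum.inr _ => False
  symm := by constructor; rintro (a | a) (b | b) h <;> simp_all; exact h.symm
  loopless := by constructor; rintro (a | a) h <;> simp_all

/-- `F` is (the vertex set of) a maximal clique of `G`. -/
def MaxClique {V : Type*} (G : SimpleGraph V) (F : Set V) : Prop :=
  Maximal G.IsClique F

/-- A graph is chordal if every cycle of length at least 4 has a chord. -/
def IsChordal {V : Type*} (G : SimpleGraph V) : Prop :=
  ∀ (n : ℕ), 4 ≤ n → ∀ c : ℕ → V, Set.InjOn c (Set.Iio n) →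
    (∀ i < n, G.Adj (c i) (c ((i + 1) % n))) →
    ∃ i < n, ∃ j < n, j ≠ i ∧ j ≠ (i + 1) % n ∧ i ≠ (j + 1) % n ∧ G.Adj (c i) (c j)

/-- A generalized block graph: a connected chordal graph in which any three distinct
maximal cliques with nonempty common intersection have all pairwise intersections equal. -/
def GenBlockGraph {V : Type*} (G : SimpleGraph V) : Prop :=
  G.Connected ∧ IsChordal G ∧
    ∀ F₁ F₂ F₃ : Set V, MaxClique G F₁ → MaxClique G F₂ → MaxClique G F₃ →
      F₁ ≠ F₂ → F₁ ≠ F₃ → F₂ ≠ F₃ → (F₁ ∩ F₂ ∩ F₃).Nonempty →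
      F₁ ∩ F₂ = F₁ ∩ F₃ ∧ F₁ ∩ F₂ = F₂ ∩ F₃

/-- `A` is a cut set of `G`: deleting `A` increases the number of connected components. -/
def IsCutSet {V : Type*} (G : SimpleGraph V) (A : Set V) : Prop :=
  nc G Set.univ < nc G Aᶜ

/-- `A` is an inclusion-minimal cut set of `G`. -/
def IsMinCutSet {V : Type*} (G : SimpleGraph V) (A : Set V) : Prop :=
  IsCutSet G A ∧ ∀ B ⊂ A, ¬ IsCutSet G B

/-- `A` is a `t`-minimal cut set of `G`: a minimal cut set which is the common
intersection of exactly `t` maximal cliques of `G` and disjoint from all other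
maximal cliques. -/
def IsTMinCut {V : Type*} (G : SimpleGraph V) (t : ℕ) (A : Set V) : Prop :=
  IsMinCutSet G A ∧
  {F : Set V | MaxClique G F ∧ A ⊆ F}.ncard = t ∧
  ⋂₀ {F : Set V | MaxClique G F ∧ A ⊆ F} = A ∧
  ∀ F : Set V, MaxClique G F → ¬ A ⊆ F → F ∩ A = ∅

/-- `B` is a branch of the facet `F` in the clique complex of `G`. -/
def IsBranch {V : Type*} (G : SimpleGraph V) (F B : Set V) : Prop :=
  MaxClique G B ∧ B ≠ F ∧ ∀ H : Set V, MaxClique G H → H ≠ F → H ∩ F ⊆ B ∩ F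

/-- `F` is a leaf of the clique complex of `G`. -/
def IsLeafClique {V : Type*} (G : SimpleGraph V) (F : Set V) : Prop :=
  MaxClique G F ∧ ((∀ F' : Set V, MaxClique G F' → F' = F) ∨ ∃ B, IsBranch G F B)

/-!
Deleting `inl '' A ∪ inr '' B` from `W(H)` leaves the components of `H[Aᶜ]`, each carrying its
whiskers, together with one isolated whisker for every vertex of `A \ B`; hence
`c = |A \ B| + c_H(Aᶜ)`. So a whisker in `T` is never a cut point, and `T = inl '' A` has the cut
point property exactly when adding back any vertex of `A` does not increase `c_H(Aᶜ)`. For complete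
`H` this forces `Aᶜ ≠ ∅`, and then `c_H(Aᶜ) = 1`. If `a, b` are distinct and non-adjacent, the
neighbourhood `N(a)` has the cut point property (each of its vertices is adjacent to `a`), but
removing it isolates `a` from `b`, so `c_H(N(a)ᶜ) ≥ 2`.
-/

namespace SimpleGraph

variable {V ι : Type*}

theorem natCard_connectedComponent_eq_of_label (G : SimpleGraph V) (f : V → ι)
    (hadj : ∀ ⦃a b⦄, G.Adj a b → f a = f b) (hsurj : Function.Surjective f)
    (hreach : ∀ ⦃a b⦄, f a = f b → G.Reachable a b) :
    Nat.card G.ConnectedComponent = Nat.card ι := by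
  have hwalk : ∀ {v w} (p : G.Walk v w), f v = f w := by
    intro v w p
    induction p with
    | nil => rfl
    | cons h _ ih => exact (hadj h).trans ih
  refine Nat.card_congr (Equiv.ofBijective (ConnectedComponent.lift f fun _ _ p _ => hwalk p)
    ⟨ConnectedComponent.ind₂ fun a b h => ConnectedComponent.sound (hreach h), fun i => ?_⟩)
  obtain ⟨a, rfl⟩ := hsurj i
  exact ⟨G.connectedComponentMk a, rfl⟩

theorem Connected.natCard_connectedComponent {G : SimpleGraph V} (hG : G.Connected) :
    Nat.card G.ConnectedComponent = 1 := by
  have := hG.preconnected.subsingleton_connectedComponent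
  have := hG.nonempty
  exact Nat.card_unique

end SimpleGraph

section NumComponents

variable {V : Type*}

theorem nc_empty (G : SimpleGraph V) : nc G ∅ = 0 :=
  Nat.card_of_isEmpty

theorem nc_univ_of_connected {G : SimpleGraph V} (hG : G.Connected) : nc G univ = 1 := by
  rw [nc, Nat.card_congr G.induceUnivIso.connectedComponentEquiv, hG.natCard_connectedComponent]

theorem nc_top {s : Set V} (hs : s.Nonempty) : nc ⊤ s = 1 := by
  have := hs.to_subtype
  rw [nc, induce_top, connected_top.natCard_connectedComponent]

theorem nc_insert_le_of_adj [Finite V] (G : SimpleGraph V) {s : Set V} {v w : V}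
    (hw : w ∈ s) (hvw : G.Adj v w) : nc G (insert v s) ≤ nc G s := by
  have hsub : s ⊆ insert v s := subset_insert v s
  refine Nat.card_le_card_of_surjective
    (ConnectedComponent.map (G.induceHomOfLE hsub).toHom) fun c => ?_
  induction c using ConnectedComponent.ind with
  | _ x =>
    obtain ⟨x, hx⟩ := x
    rcases mem_insert_iff.mp hx with rfl | hxs
    · refine ⟨(G.induce s).connectedComponentMk ⟨w, hw⟩, ConnectedComponent.sound ?_⟩
      exact Adj.reachable (G := G.induce (insert x s)) (u := ⟨w, hsub hw⟩) hvw.symm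
    · exact ⟨(G.induce s).connectedComponentMk ⟨x, hxs⟩, rfl⟩

theorem one_lt_nc_of_isolated [Finite V] {G : SimpleGraph V} {s : Set V} {a b : V}
    (ha : a ∈ s) (hb : b ∈ s) (hab : a ≠ b) (hiso : ∀ c ∈ s, ¬ G.Adj a c) :
    1 < nc G s := by
  have hne : (G.induce s).connectedComponentMk ⟨a, ha⟩ ≠
      (G.induce s).connectedComponentMk ⟨b, hb⟩ := by
    intro h
    obtain ⟨p⟩ := ConnectedComponent.exact h
    cases p with
    | nil => exact hab rfl
    | cons h _ => exact hiso _ (Subtype.prop _) h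
  have : Nontrivial (G.induce s).ConnectedComponent := ⟨⟨_, _, hne⟩⟩
  exact Finite.one_lt_card

end NumComponents

section Whisker

variable {V : Type*} (H : SimpleGraph V)

open Classical in
/-- A whisker vertex `inr v` with `v ∈ A` is isolated and labelled by itself; every other
vertex is labelled by the component of `H[Aᶜ]` on which it hangs. -/
noncomputable def whiskerComponentLabel (A B : Set V) :
    ↥(Sum.inl '' A ∪ Sum.inr '' B)ᶜ → ↥(A \ B) ⊕ (H.induce Aᶜ).ConnectedComponent
  | ⟨.inl v, h⟩ => .inr ((H.induce Aᶜ).connectedComponentMk ⟨v, by simpa using h⟩)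
  | ⟨.inr v, h⟩ =>
    if hv : v ∈ A then .inl ⟨v, hv, by simpa using h⟩
    else .inr ((H.induce Aᶜ).connectedComponentMk ⟨v, hv⟩)

theorem nc_whiskerGraph_compl [Finite V] (A B : Set V) :
    nc (whiskerGraph H) (Sum.inl '' A ∪ Sum.inr '' B)ᶜ = (A \ B).ncard + nc H Aᶜ := by
  set S : Set (V ⊕ V) := (Sum.inl '' A ∪ Sum.inr '' B)ᶜ
  have hinl : ∀ {v}, v ∉ A → Sum.inl v ∈ S := fun hv => by simpa [S] using hv
  have hlift : ∀ {u w : V} (hu : u ∉ A) (hw : w ∉ A),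
      (H.induce Aᶜ).Reachable ⟨u, hu⟩ ⟨w, hw⟩ →
        ((whiskerGraph H).induce S).Reachable ⟨_, hinl hu⟩ ⟨_, hinl hw⟩ :=
    fun _ _ r => r.map (G' := (whiskerGraph H).induce S)
      ⟨fun v => ⟨Sum.inl v.1, hinl v.2⟩, fun h => h⟩
  have hpendant : ∀ {v} (hv : Sum.inr v ∈ S) (hvA : v ∉ A),
      ((whiskerGraph H).induce S).Reachable ⟨_, hv⟩ ⟨_, hinl hvA⟩ :=
    fun _ _ => Adj.reachable rfl
  rw [nc, natCard_connectedComponent_eq_of_label _ (whiskerComponentLabel H A B),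
    Nat.card_sum, Nat.card_coe_set_eq, nc]
  · rintro ⟨a | a, ha⟩ ⟨b | b, hb⟩ hab
    · exact congrArg Sum.inr (ConnectedComponent.sound (Adj.reachable hab))
    · obtain rfl : a = b := hab
      simp [whiskerComponentLabel, show a ∉ A by simpa [S] using ha]
    · obtain rfl : a = b := hab
      simp [whiskerComponentLabel, show a ∉ A by simpa [S] using hb]
    · exact hab.elim
  · rintro (⟨v, hvA, hvB⟩ | c)
    · exact ⟨⟨Sum.inr v, by simpa [S] using hvB⟩, by simp [whiskerComponentLabel, hvA]⟩
    · induction c using ConnectedComponent.ind with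
      | _ x => exact ⟨⟨Sum.inl x.1, hinl x.2⟩, rfl⟩
  · rintro ⟨a | a, ha⟩ ⟨b | b, hb⟩ hab
    · simp only [whiskerComponentLabel, Sum.inr.injEq] at hab
      exact hlift _ _ (ConnectedComponent.exact hab)
    · by_cases hbA : b ∈ A
      · simp [whiskerComponentLabel, hbA] at hab
      · simp only [whiskerComponentLabel, hbA, dite_false, Sum.inr.injEq] at hab
        exact (hlift _ _ (ConnectedComponent.exact hab)).trans (hpendant hb hbA).symm
    · by_cases haA : a ∈ A
      · simp [whiskerComponentLabel, haA] at hab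
      · simp only [whiskerComponentLabel, haA, dite_false, Sum.inr.injEq] at hab
        exact (hpendant ha haA).trans (hlift _ _ (ConnectedComponent.exact hab))
    · by_cases haA : a ∈ A <;> by_cases hbA : b ∈ A <;>
        simp only [whiskerComponentLabel, haA, hbA, dite_true, dite_false, Sum.inr.injEq,
          Sum.inl.injEq, reduceCtorEq] at hab
      · obtain rfl : a = b := congrArg Subtype.val hab
        rfl
      · exact (hpendant ha haA).trans
          ((hlift _ _ (ConnectedComponent.exact hab)).trans (hpendant hb hbA).symm)

theorem nc_whiskerGraph_compl_image_inl [Finite V] (A : Set V) :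
    nc (whiskerGraph H) (Sum.inl '' A)ᶜ = A.ncard + nc H Aᶜ := by
  simpa using nc_whiskerGraph_compl H A ∅

theorem CutPointProperty.exists_eq_image_inl [Finite V] {T : Set (V ⊕ V)}
    (hT : CutPointProperty (whiskerGraph H) T) : ∃ A : Set V, T = Sum.inl '' A := by
  set A := Sum.inl ⁻¹' T
  set B := Sum.inr ⁻¹' T
  have hAB : T = Sum.inl '' A ∪ Sum.inr '' B :=
    (image_preimage_inl_union_image_preimage_inr T).symm
  suffices hB : B = ∅ from ⟨A, by rw [hAB, hB, image_empty, union_empty]⟩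
  refine eq_empty_of_forall_notMem fun v hv => ?_
  have hremove : Tᶜ ∪ {Sum.inr v} = (Sum.inl '' A ∪ Sum.inr '' (B \ {v}))ᶜ := by
    ext (w | w) <;> by_cases hw : w = v <;> simp [A, B, hw]
  have hlt := hT _ hv
  rw [hremove, hAB, nc_whiskerGraph_compl, nc_whiskerGraph_compl] at hlt
  have : (A \ B).ncard ≤ (A \ (B \ {v})).ncard :=
    ncard_le_ncard (sdiff_subset_sdiff_right sdiff_subset)
  omega

theorem cutPointProperty_whiskerGraph_image_inl_iff [Finite V] (A : Set V) :
    CutPointProperty (whiskerGraph H) (Sum.inl '' A) ↔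
      ∀ v ∈ A, nc H (insert v Aᶜ) ≤ nc H Aᶜ := by
  refine forall_mem_image.trans (forall₂_congr fun v hv => ?_)
  have hremove : (Sum.inl '' A : Set (V ⊕ V))ᶜ ∪ {Sum.inl v} = (Sum.inl '' (A \ {v}))ᶜ := by
    simp [compl_sdiff, image_sdiff Sum.inl_injective]
  rw [hremove, nc_whiskerGraph_compl_image_inl, nc_whiskerGraph_compl_image_inl,
    show (A \ {v})ᶜ = insert v Aᶜ by simp [compl_sdiff]]
  have := ncard_sdiff_singleton_add_one hv (toFinite A)
  omega

theorem exists_cutPointProperty_whiskerGraph_ne [Finite V] (hH : H ≠ ⊤) :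
    ∃ T, CutPointProperty (whiskerGraph H) T ∧ nc (whiskerGraph H) Tᶜ ≠ T.ncard + 1 := by
  obtain ⟨a, b, hab, hnadj⟩ := ne_top_iff_exists_not_adj.mp hH
  have ha : a ∉ H.neighborSet a := H.irrefl
  refine ⟨Sum.inl '' H.neighborSet a, ?_, ?_⟩
  · exact (cutPointProperty_whiskerGraph_image_inl_iff H _).mpr fun v hv =>
      nc_insert_le_of_adj H ha (H.adj_symm hv)
  · have := one_lt_nc_of_isolated (G := H) (s := (H.neighborSet a)ᶜ) ha hnadj hab
      fun _ hc hac => hc hac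
    rw [nc_whiskerGraph_compl_image_inl, ncard_image_of_injective _ Sum.inl_injective]
    omega

theorem CutPointProperty.exists_ne_univ_and_nc_eq_of_whiskerGraph_top [Finite V]
    {T : Set (V ⊕ V)} (hT : CutPointProperty (whiskerGraph ⊤) T) (hne : T.Nonempty) :
    (∃ A : Set V, A ≠ univ ∧ T = Sum.inl '' A) ∧ nc (whiskerGraph ⊤) Tᶜ = T.ncard + 1 := by
  obtain ⟨A, rfl⟩ := hT.exists_eq_image_inl
  obtain ⟨v, hv⟩ := hne.of_image
  have hAc : Aᶜ.Nonempty := by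
    by_contra h
    have := (cutPointProperty_whiskerGraph_image_inl_iff ⊤ A).mp hT v hv
    rw [not_nonempty_iff_eq_empty.mp h, nc_empty, nc_top (insert_nonempty v _)] at this
    omega
  refine ⟨⟨A, fun h => by simp [h] at hAc, rfl⟩, ?_⟩
  rw [nc_whiskerGraph_compl_image_inl, nc_top hAc, ncard_image_of_injective _ Sum.inl_injective]

end Whisker

/-- the whisker graph `W(H)` of a connected graph `H` is unmixed
(Rauf–Rinaldo sense) iff `H` is complete; moreover, if `H` is complete then every nonempty
`T ∈ 𝒞(W(H))` consists of original vertices only, is proper, and satisfies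
`c(T) = |T| + 1`. -/
theorem stmt19 {V : Type*} [Fintype V] (H : SimpleGraph V) (hH : H.Connected) :
    ((∀ T : Set (V ⊕ V), CutPointProperty (whiskerGraph H) T →
        nc (whiskerGraph H) Tᶜ = T.ncard + 1) ↔ H = ⊤) ∧
    (H = ⊤ → ∀ T : Set (V ⊕ V), T.Nonempty → CutPointProperty (whiskerGraph H) T →
      (∃ T₀ : Set V, T₀ ≠ Set.univ ∧ T = Sum.inl '' T₀) ∧
      nc (whiskerGraph H) Tᶜ = T.ncard + 1) := by
  refine ⟨⟨fun hunmixed => ?_, ?_⟩, ?_⟩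
  · by_contra hne
    obtain ⟨T, hT, hc⟩ := exists_cutPointProperty_whiskerGraph_ne H hne
    exact hc (hunmixed T hT)
  · rintro rfl T hT
    rcases T.eq_empty_or_nonempty with rfl | hne
    · simpa [nc_univ_of_connected hH] using
        nc_whiskerGraph_compl_image_inl (⊤ : SimpleGraph V) ∅
    · exact (hT.exists_ne_univ_and_nc_eq_of_whiskerGraph_top hne).2
  · rintro rfl T hne hT
    exact hT.exists_ne_univ_and_nc_eq_of_whiskerGraph_top hne
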